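/- arXiv:2407.08128 — 2 statements merged into one kernel-verified Lean document; each statement's English description precedes it below -/
import Mathlib

section
/- Model a multiple clock domain circuit abstractly as follows: at each time step m ∈ ℕ, each of n flip-flops either latches (takes a fresh value depending on the current input and all flip-flop contents) or holds its previous content. Define, for each flip-flop j and time m, the set Ref j m ⊆ ℕ of input time indices that the content of flip-flop j at time m can depend on, by: if j latches at time m then Ref j m = {m-1} ∪ ⋃_{j'} Ref j' (m-1), and if j holds then Ref j m = Ref j (m-1), with Ref j 0 = ∅. Then for every flip-flop j, every m₁ ≤ m₂, and every l₁ ∈ Ref j m₁, there exists l₂ ≥ l₁ with l₂ ∈ Ref j m₂. -/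
/-- Reference sets of flip-flops in an abstract multiple clock domain circuit. -/
def Ref {n : ℕ} (latch : Fin n → ℕ → Bool) : ℕ → Fin n → Finset ℕ
  | 0 => fun _ => ∅
  | m + 1 => fun j =>
      if latch j (m + 1) then insert m (Finset.univ.biUnion fun j' => Ref latch m j')
      else Ref latch m j

lemma Ref_lt {n : ℕ} (latch : Fin n → ℕ → Bool) :
    ∀ m (j : Fin n) (l : ℕ), l ∈ Ref latch m j → l < m := by
  intro m
  induction m with
  | zero => intro j l h; simp [Ref] at h
  | succ m ih =>
    intro j l h
    simp only [Ref] at h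
    split at h
    · rcases Finset.mem_insert.mp h with rfl | h
      · omega
      · obtain ⟨j', _, h⟩ := Finset.mem_biUnion.mp h
        exact (ih j' l h).trans (Nat.lt_succ_self m)
    · exact (ih j l h).trans (Nat.lt_succ_self m)

theorem ref_lemma {n : ℕ} (latch : Fin n → ℕ → Bool) (j : Fin n)
    (m₁ m₂ : ℕ) (hm : m₁ ≤ m₂) (l₁ : ℕ) (hl₁ : l₁ ∈ Ref latch m₁ j) :
    ∃ l₂, l₁ ≤ l₂ ∧ l₂ ∈ Ref latch m₂ j := by
  induction m₂, hm using Nat.le_induction with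
  | base => exact ⟨l₁, le_refl _, hl₁⟩
  | succ m hm ih =>
    obtain ⟨l, hl, hmem⟩ := ih
    simp only [Ref]
    split
    · exact ⟨m, hl.trans (Nat.le_of_lt (Ref_lt latch m j l hmem)),
        Finset.mem_insert_self _ _⟩
    · exact ⟨l, hl, hmem⟩
end

section
/- In the multiple clock domain model, the sequence of reference sets at the output, defined by Out m = ⋃_{j} Ref j m, satisfies: for all m₁ ≤ m₂ and l₁ ∈ Out m₁, there exists l₂ ∈ Out m₂ with l₂ ≥ l₁. Consequently the function m ↦ Out m, ordered by the relation 'S ⪯ T iff every element of S is ≤ some element of T and S, T arise as Out values at comparable times', has monotone maximum: max(Out m₁) ≤ max(Out m₂) whenever both are nonempty and m₁ ≤ m₂. -/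
/-- Output reference set at time m: the output may refer to all flip-flop contents. -/
def Out {n : ℕ} (latch : Fin n → ℕ → Bool) (m : ℕ) : Finset ℕ :=
  Finset.univ.biUnion fun j => Ref latch m j

lemma Ref_subset_succ {n : ℕ} (latch : Fin n → ℕ → Bool) (m : ℕ) (j : Fin n) :
    Ref latch m j ⊆ Ref latch (m + 1) j := by
  intro x hx
  simp only [Ref]
  split
  · exact Finset.mem_insert_of_mem (Finset.mem_biUnion.2 ⟨j, Finset.mem_univ j, hx⟩)
  · exact hx

lemma Out_mono {n : ℕ} (latch : Fin n → ℕ → Bool) {m₁ m₂ : ℕ} (h : m₁ ≤ m₂) :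
    Out latch m₁ ⊆ Out latch m₂ := by
  induction m₂ with
  | zero =>
    have : m₁ = 0 := Nat.le_zero.1 h
    subst this; exact subset_rfl
  | succ m ih =>
    rcases Nat.lt_or_ge m₁ (m+1) with h' | h'
    · refine (ih (Nat.lt_succ_iff.1 h')).trans ?_
      intro x hx
      obtain ⟨j, _, hj⟩ := Finset.mem_biUnion.1 hx
      exact Finset.mem_biUnion.2 ⟨j, Finset.mem_univ j, Ref_subset_succ latch m j hj⟩
    · have : m₁ = m + 1 := le_antisymm h h'
      subst this; exact subset_rfl

theorem out_lemma_and_max_monotone {n : ℕ} (latch : Fin n → ℕ → Bool) :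
    (∀ m₁ m₂ : ℕ, m₁ ≤ m₂ → ∀ l₁ ∈ Out latch m₁, ∃ l₂ ∈ Out latch m₂, l₁ ≤ l₂) ∧
    (∀ m₁ m₂ : ℕ, m₁ ≤ m₂ → (Out latch m₁).Nonempty → (Out latch m₂).Nonempty →
      (Out latch m₁).max ≤ (Out latch m₂).max) := by
  constructor
  · intro m₁ m₂ h l₁ hl₁
    exact ⟨l₁, Out_mono latch h hl₁, le_rfl⟩
  · intro m₁ m₂ h _ _
    exact Finset.max_mono (Out_mono latch h)
end
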